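/- Let X, Y be n×n real symmetric matrices. Then tr(XY) ≤ ⟨λ(X), λ(Y)⟩, where λ(A) ∈ ℝⁿ denotes the eigenvalues of A listed in decreasing order. -/
import Mathlib


open Finset

/-- Decreasing rearrangement of a vector in ℝⁿ. -/
noncomputable def dsort {n : ℕ} (v : Fin n → ℝ) : Fin n → ℝ :=
  fun i => - ((fun j => - v j) ∘ Tuple.sort (fun j => - v j)) i

lemma dsort_apply {n : ℕ} (v : Fin n → ℝ) (i : Fin n) :
    dsort v i = v (Tuple.sort (fun j => - v j) i) := by
  simp [dsort]

lemma antitone_dsort {n : ℕ} (v : Fin n → ℝ) : Antitone (dsort v) := by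
  have := Tuple.monotone_sort (fun j => - v j)
  intro a b hab
  simp only [dsort, neg_le_neg_iff]
  exact this hab

/-- Key combinatorial lemma: a doubly stochastic average of products of monovarying
vectors is at most the aligned sum of products. -/
lemma key_ds {n : ℕ} {μ ν : Fin n → ℝ} (h : Monovary μ ν)
    {S : Matrix (Fin n) (Fin n) ℝ} (hS : S ∈ doublyStochastic ℝ (Fin n)) :
    ∑ i, ∑ j, S i j * (μ i * ν j) ≤ ∑ i, μ i * ν i := by
  have hlin : IsLinearMap ℝ
      (fun M : Matrix (Fin n) (Fin n) ℝ => ∑ i, ∑ j, M i j * (μ i * ν j)) := by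
    constructor
    · intro A B
      simp [Matrix.add_apply, add_mul, Finset.sum_add_distrib]
    · intro c A
      simp [Matrix.smul_apply, Finset.mul_sum, mul_assoc, smul_eq_mul]
  have hsub : (doublyStochastic ℝ (Fin n) : Set (Matrix (Fin n) (Fin n) ℝ)) ⊆
      {M | ∑ i, ∑ j, M i j * (μ i * ν j) ≤ ∑ i, μ i * ν i} := by
    rw [doublyStochastic_eq_convexHull_permMatrix]
    apply convexHull_min ?_ (convex_halfSpace_le hlin _)
    rintro M ⟨σ, rfl⟩
    have : ∀ i, ∑ j, (σ.permMatrix ℝ) i j * (μ i * ν j) = μ i * ν (σ i) := by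
      intro i
      simp [Equiv.Perm.permMatrix, PEquiv.toMatrix_apply, Equiv.toPEquiv_apply,
        Finset.sum_ite_eq']
    simp only [Set.mem_setOf_eq, this]
    simpa using h.sum_smul_comp_perm_le_sum_smul (σ := σ)
  exact hsub hS

/-- Trace of a product of Hermitian matrices as a double sum over squared entries
of a unitary against the eigenvalues. -/
lemma trace_eq_double_sum {n : ℕ} (X Y : Matrix (Fin n) (Fin n) ℝ)
    (hX : X.IsHermitian) (hY : Y.IsHermitian) :
    ∃ (W : Matrix.unitaryGroup (Fin n) ℝ), Matrix.trace (X * Y) =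
      ∑ i, ∑ j, (W : Matrix (Fin n) (Fin n) ℝ) i j * (W : Matrix (Fin n) (Fin n) ℝ) i j *
        (hX.eigenvalues i * hY.eigenvalues j) := by
  set U := hX.eigenvectorUnitary
  set V := hY.eigenvectorUnitary
  refine ⟨star U * V, ?_⟩
  set W : Matrix (Fin n) (Fin n) ℝ :=
    ((star U * V : Matrix.unitaryGroup (Fin n) ℝ) : Matrix (Fin n) (Fin n) ℝ) with hW
  have hXe : X = (U : Matrix (Fin n) (Fin n) ℝ) * Matrix.diagonal hX.eigenvalues *
      star (U : Matrix (Fin n) (Fin n) ℝ) := by simpa using hX.spectral_theorem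
  have hYe : Y = (V : Matrix (Fin n) (Fin n) ℝ) * Matrix.diagonal hY.eigenvalues *
      star (V : Matrix (Fin n) (Fin n) ℝ) := by simpa using hY.spectral_theorem
  have hWdef : W = star (U : Matrix (Fin n) (Fin n) ℝ) * (V : Matrix (Fin n) (Fin n) ℝ) := rfl
  have htr : Matrix.trace (X * Y) =
      Matrix.trace (Matrix.diagonal hX.eigenvalues * W * Matrix.diagonal hY.eigenvalues *
        star W) := by
    conv_lhs => rw [hXe, hYe]
    rw [hWdef]
    simp only [StarMul.star_mul, star_star]
    rw [show (U : Matrix (Fin n) (Fin n) ℝ) * Matrix.diagonal hX.eigenvalues *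
        star (U : Matrix (Fin n) (Fin n) ℝ) *
        ((V : Matrix (Fin n) (Fin n) ℝ) * Matrix.diagonal hY.eigenvalues *
          star (V : Matrix (Fin n) (Fin n) ℝ)) =
        (U : Matrix (Fin n) (Fin n) ℝ) * (Matrix.diagonal hX.eigenvalues *
          (star (U : Matrix (Fin n) (Fin n) ℝ) * (V : Matrix (Fin n) (Fin n) ℝ)) *
          Matrix.diagonal hY.eigenvalues * (star (V : Matrix (Fin n) (Fin n) ℝ))) by
      noncomm_ring]
    rw [Matrix.trace_mul_comm]
    noncomm_ring
  rw [htr, Matrix.trace]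
  congr 1
  funext i
  rw [Matrix.diag_apply, Matrix.mul_apply]
  refine Finset.sum_congr rfl fun j _ => ?_
  rw [Matrix.mul_diagonal, Matrix.diagonal_mul, Matrix.star_apply, star_trivial]
  ring

theorem stmt10 {n : ℕ} (X Y : Matrix (Fin n) (Fin n) ℝ)
    (hX : X.IsHermitian) (hY : Y.IsHermitian) :
    Matrix.trace (X * Y) ≤ ∑ i, dsort hX.eigenvalues i * dsort hY.eigenvalues i := by
  obtain ⟨W, hWtr⟩ := trace_eq_double_sum X Y hX hY
  set μ := hX.eigenvalues
  set ν := hY.eigenvalues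
  set Wm : Matrix (Fin n) (Fin n) ℝ := (W : Matrix (Fin n) (Fin n) ℝ) with hWm
  set σ := Tuple.sort (fun j => - μ j)
  set τ := Tuple.sort (fun j => - ν j)
  -- the doubly-stochastic matrix of squared entries, rows/cols permuted by σ/τ
  set S : Matrix (Fin n) (Fin n) ℝ :=
    Matrix.of (fun i j => Wm (σ i) (τ j) * Wm (σ i) (τ j)) with hS
  have hWW : Wm * star Wm = 1 := (Matrix.mem_unitaryGroup_iff).mp W.2
  have hWW' : star Wm * Wm = 1 := (Matrix.mem_unitaryGroup_iff').mp W.2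
  have hrow : ∀ i, ∑ j, Wm i j * Wm i j = 1 := by
    intro i
    have : (Wm * star Wm) i i = 1 := by rw [hWW, Matrix.one_apply_eq]
    rw [Matrix.mul_apply] at this
    simpa [Matrix.star_apply] using this
  have hcol : ∀ j, ∑ i, Wm i j * Wm i j = 1 := by
    intro j
    have : (star Wm * Wm) j j = 1 := by rw [hWW', Matrix.one_apply_eq]
    rw [Matrix.mul_apply] at this
    simpa [Matrix.star_apply] using this
  have hSds : S ∈ doublyStochastic ℝ (Fin n) := by
    rw [mem_doublyStochastic_iff_sum]
    refine ⟨fun i j => mul_self_nonneg _, fun i => ?_, fun j => ?_⟩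
    · rw [show ∑ j, S i j = ∑ j, Wm (σ i) (τ j) * Wm (σ i) (τ j) from rfl]
      rw [Equiv.sum_comp τ (fun j => Wm (σ i) j * Wm (σ i) j)]
      exact hrow _
    · rw [show ∑ i, S i j = ∑ i, Wm (σ i) (τ j) * Wm (σ i) (τ j) from rfl]
      rw [Equiv.sum_comp σ (fun i => Wm i (τ j) * Wm i (τ j))]
      exact hcol _
  have hmono : Monovary (dsort μ) (dsort ν) :=
    (antitone_dsort μ).monovary (antitone_dsort ν)
  have hkey := key_ds hmono hSds
  have hrw : ∑ i, ∑ j, S i j * (dsort μ i * dsort ν j) =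
      ∑ i, ∑ j, Wm i j * Wm i j * (μ i * ν j) := by
    rw [← Equiv.sum_comp σ (fun i => ∑ j, Wm i j * Wm i j * (μ i * ν j))]
    refine Finset.sum_congr rfl fun i _ => ?_
    rw [← Equiv.sum_comp τ (fun j => Wm (σ i) j * Wm (σ i) j * (μ (σ i) * ν j))]
    refine Finset.sum_congr rfl fun j _ => ?_
    rw [dsort_apply, dsort_apply]
    rfl
  rw [hWtr, ← hrw]
  exact hkey
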